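/- On the extension E(P) of a poset with antitone involution (as in the four-element-chain construction), the operation ⊙ defined by: 0 ⊙ x = x ⊙ 0 = 0, 1 ⊙ x = x ⊙ 1 = x, and for x, y ∉ {0,1}, x ⊙ y = 0 if x ≤ y' and x ⊙ y = c₂ otherwise, is associative. -/
import Mathlib

attribute [local instance] Classical.propDecidable

/-- The extension E(P) = P ∪ {c₁, c₂, c₃, c₄} of a poset P: `base x` is an
element of P, and `ext i` (i : Fin 4) is the element cᵢ₊₁, so `ext 0` = c₁ = 0
and `ext 3` = c₄ = 1. -/
inductive EP (P : Type*) where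
  | base : P → EP P
  | ext : Fin 4 → EP P

namespace EP

variable {P : Type*} [PartialOrder P]

/-- The order on E(P): 0 = c₁ < c₂ < x < c₃ < c₄ = 1 for all x ∈ P. -/
def le : EP P → EP P → Prop
  | base x, base y => x ≤ y
  | base _, ext i => 2 ≤ i.val
  | ext i, base _ => i.val ≤ 1
  | ext i, ext j => i ≤ j

instance : PartialOrder (EP P) where
  le := le
  le_refl x := by cases x <;> simp [le]
  le_trans x y z := by
    cases x <;> cases y <;> cases z <;>
      simp only [le, Fin.le_def] <;> intros <;>
      first
        | omega
        | (apply le_trans <;> assumption)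
        | trivial
  le_antisymm x y := by
    cases x <;> cases y <;>
      simp only [le, Fin.le_def] <;> intros <;>
      first
        | (congr 1; apply le_antisymm <;> assumption)
        | (congr 1; omega)
        | omega

/-- The extension of the antitone involution ' of P to E(P), with cᵢ' = c₅₋ᵢ. -/
def inv (f : P → P) : EP P → EP P
  | base x => base (f x)
  | ext i => ext ⟨3 - i.val, by omega⟩

/-- The monoid operation ⊙ on E(P). -/
noncomputable def mul (f : P → P) (x y : EP P) : EP P :=
  if x = ext 0 ∨ y = ext 0 then ext 0
  else if x = ext 3 then y
  else if y = ext 3 then x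
  else if le x (inv f y) then ext 0 else ext 1

/-- The residuum → on E(P). -/
noncomputable def imp (f : P → P) (x y : EP P) : EP P :=
  if x = ext 0 ∨ y = ext 3 then ext 3
  else if y = ext 0 then inv f x
  else if x = ext 3 then y
  else if le x y then ext 3 else ext 2

end EP

namespace EP

variable {P : Type*} [PartialOrder P]

lemma zero_mul' (f : P → P) (x : EP P) : mul f (ext 0) x = ext 0 := by
  simp [mul]

lemma mul_zero' (f : P → P) (x : EP P) : mul f x (ext 0) = ext 0 := by
  simp [mul]

lemma one_mul' (f : P → P) (x : EP P) : mul f (ext 3) x = x := by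
  unfold mul
  split_ifs with h1 h2 h3 <;> simp_all

lemma mul_one' (f : P → P) (x : EP P) : mul f x (ext 3) = x := by
  unfold mul
  split_ifs with h1 h2 h3 <;> simp_all

lemma mul_mem (f : P → P) (x y : EP P) (hx : x ≠ ext 3) (hy : y ≠ ext 3) :
    mul f x y = ext 0 ∨ mul f x y = ext 1 := by
  unfold mul
  split_ifs <;> simp_all

lemma ext1_mul (f : P → P) (x : EP P) (hx0 : x ≠ ext 0) (hx3 : x ≠ ext 3) :
    mul f (ext 1) x = ext 0 := by
  have hle : le (ext 1 : EP P) (inv f x) := by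
    cases x with
    | base p => simp [inv, le]
    | ext i =>
      simp only [inv, le, Fin.le_def]
      have h0 : i ≠ 0 := fun h => hx0 (by simp [h])
      have h3 : i ≠ 3 := fun h => hx3 (by simp [h])
      omega
  unfold mul
  split_ifs <;> simp_all

lemma mul_ext1 (f : P → P) (x : EP P) (hx0 : x ≠ ext 0) (hx3 : x ≠ ext 3) :
    mul f x (ext 1) = ext 0 := by
  have hle : le x (inv f (ext 1 : EP P)) := by
    cases x with
    | base p => simp [inv, le]
    | ext i =>
      simp only [inv, le, Fin.le_def]
      have h0 : i ≠ 0 := fun h => hx0 (by simp [h])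
      have h3 : i ≠ 3 := fun h => hx3 (by simp [h])
      omega
  unfold mul
  split_ifs <;> simp_all

end EP

/-- On E(P), the operation ⊙ is associative. -/
theorem stmt7 {P : Type*} [PartialOrder P] (f : P → P)
    (hanti : ∀ x y : P, x ≤ y → f y ≤ f x) (hinv : ∀ x : P, f (f x) = x) :
    ∀ x y z : EP P, EP.mul f (EP.mul f x y) z = EP.mul f x (EP.mul f y z) := by
  intro x y z
  by_cases hx0 : x = EP.ext 0
  · subst hx0; simp [EP.zero_mul']
  by_cases hy0 : y = EP.ext 0
  · subst hy0; simp [EP.zero_mul', EP.mul_zero']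
  by_cases hz0 : z = EP.ext 0
  · subst hz0; simp [EP.mul_zero']
  by_cases hx3 : x = EP.ext 3
  · subst hx3; simp [EP.one_mul']
  by_cases hy3 : y = EP.ext 3
  · subst hy3; simp [EP.one_mul', EP.mul_one']
  by_cases hz3 : z = EP.ext 3
  · subst hz3; simp [EP.mul_one']
  rcases EP.mul_mem f x y hx3 hy3 with h | h <;>
    rcases EP.mul_mem f y z hy3 hz3 with h' | h' <;>
    rw [h, h'] <;>
    simp [EP.zero_mul', EP.mul_zero', EP.ext1_mul f z hz0 hz3,
      EP.mul_ext1 f x hx0 hx3]
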